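/- arXiv:math/0011059 — 4 statements merged into one kernel-verified Lean document; each statement's English description precedes it below -/
import Mathlib

section
/- Let λ : ℝ → ℝ be continuously differentiable with Λ(t) = ∫_0^t λ(s) ds, and suppose p, q : ℝ → ℝ satisfy p' = λ·(q - p), q' = λ·(p - q), with p(0) = 1, q(0) = 0. Then p(t) = (1 + e^{-2Λ(t)})/2 and q(t) = (1 - e^{-2Λ(t)})/2 for all t ≥ 0. -/
/-!
Adding the two equations shows that `p + q` is constant, hence equal to `1`; subtracting them
gives the scalar linear equation `(p - q)' = -2λ (p - q)`, whose solution through `(0, 1)` is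
`exp (-2Λ)`. Solving for `p` and `q` gives the claim.
-/

open Real

theorem eq_mul_exp_sub_of_hasDerivAt {a A y : ℝ → ℝ} (hA : ∀ t, HasDerivAt A (a t) t)
    (hy : ∀ t, HasDerivAt y (a t * y t) t) (s t : ℝ) :
    y t = y s * exp (A t - A s) := by
  have hderiv : ∀ t, HasDerivAt (fun t => y t * exp (-A t)) 0 t := fun t =>
    ((hy t).mul ((hA t).neg.exp)).congr_deriv (by ring)
  have hconst := is_const_of_deriv_eq_zero (fun t => (hderiv t).differentiableAt)
    (fun t => (hderiv t).deriv) t s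
  calc y t = y t * exp (-A t) * exp (A t) := by rw [mul_assoc, ← exp_add]; simp
    _ = y s * exp (A t - A s) := by rw [hconst, mul_assoc, ← exp_add, neg_add_eq_sub]

/-- Solution of the ODE system for the conditional velocity probabilities of
the telegrapher's velocity process. -/
theorem velocity_ode_solution (f : ℝ → ℝ) (Λ p q : ℝ → ℝ)
    (hf : ContDiff ℝ 1 f)
    (hΛ : ∀ t, Λ t = ∫ s in (0:ℝ)..t, f s)
    (hp : Differentiable ℝ p) (hq : Differentiable ℝ q)
    (hp' : ∀ t, deriv p t = f t * (q t - p t))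
    (hq' : ∀ t, deriv q t = f t * (p t - q t))
    (hp0 : p 0 = 1) (hq0 : q 0 = 0) :
    ∀ t, 0 ≤ t →
      p t = (1 + Real.exp (-2 * Λ t)) / 2 ∧
      q t = (1 - Real.exp (-2 * Λ t)) / 2 := by
  have hΛd : ∀ t, HasDerivAt Λ (f t) t := by
    rw [funext hΛ]
    exact fun t => (hf.continuous.integral_hasStrictDerivAt 0 t).hasDerivAt
  have hpd : ∀ t, HasDerivAt p (f t * (q t - p t)) t := fun t => hp' t ▸ (hp t).hasDerivAt
  have hqd : ∀ t, HasDerivAt q (f t * (p t - q t)) t := fun t => hq' t ▸ (hq t).hasDerivAt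
  have hsum : ∀ t, p t + q t = 1 := fun t => by
    have := is_const_of_deriv_eq_zero (hp.add hq)
      (fun t => ((hpd t).add (hqd t)).deriv.trans (by ring)) t 0
    simpa [hp0, hq0] using this
  have hdiff : ∀ t, p t - q t = exp (-2 * Λ t) := fun t => by
    have := eq_mul_exp_sub_of_hasDerivAt (fun t => (hΛd t).const_mul (-2))
      (fun t => ((hpd t).sub (hqd t)).congr_deriv (by simp only [Pi.sub_apply]; ring)) 0 t
    simpa [hp0, hq0, hΛ] using this
  intro t _
  constructor <;> linarith [hsum t, hdiff t]
end

section
/- Suppose u : ℝ × ℝ → ℝ is twice differentiable and satisfies the telegraph equation u_tt + 2λ(t)u_t = c²u_xx, where λ(t) = θ·tanh(θt). Then v(x,t) = cosh(θt)·u(x,t) satisfies the Klein–Gordon-type equation v_tt - θ²v = c²v_xx. -/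
/-!
Since `cosh(θt)'' = θ² cosh(θt)` and `sinh = tanh · cosh`, the Leibniz rule gives
`(cosh(θt) g)'' - θ² cosh(θt) g = cosh(θt) (g'' + 2θ tanh(θt) g')` for every `C²` function `g`.
Applied to `g = u(x, ·)`, the telegraph equation turns the right-hand side into
`c² cosh(θt) u_xx = c² v_xx`.
-/

open Real

theorem deriv_deriv_mul {𝕜 : Type*} [NontriviallyNormedField 𝕜] {f g : 𝕜 → 𝕜}
    (hf : ContDiff 𝕜 2 f) (hg : ContDiff 𝕜 2 g) (x : 𝕜) :
    deriv (deriv fun y => f y * g y) x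
      = deriv (deriv f) x * g x + 2 * (deriv f x * deriv g x) + f x * deriv (deriv g) x := by
  have hf₁ : Differentiable 𝕜 f := hf.differentiable (by norm_num)
  have hg₁ : Differentiable 𝕜 g := hg.differentiable (by norm_num)
  have hf₂ : DifferentiableAt 𝕜 (deriv f) x := hf.differentiable_deriv_two x
  have hg₂ : DifferentiableAt 𝕜 (deriv g) x := hg.differentiable_deriv_two x
  have h : deriv (fun y => f y * g y) = fun y => deriv f y * g y + f y * deriv g y :=
    funext fun y => deriv_mul (hf₁ y) (hg₁ y)
  rw [h, ((hf₂.hasDerivAt.fun_mul (hg₁ x).hasDerivAt).fun_add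
    ((hf₁ x).hasDerivAt.fun_mul hg₂.hasDerivAt)).deriv]
  ring

theorem deriv_cosh_mul (θ : ℝ) : deriv (fun τ => cosh (θ * τ)) = fun τ => θ * sinh (θ * τ) :=
  funext fun τ => by
    simpa [mul_comm] using ((hasDerivAt_id τ).const_mul θ).cosh.deriv

theorem deriv_sinh_mul (θ : ℝ) : deriv (fun τ => sinh (θ * τ)) = fun τ => θ * cosh (θ * τ) :=
  funext fun τ => by
    simpa [mul_comm] using ((hasDerivAt_id τ).const_mul θ).sinh.deriv

theorem deriv_deriv_cosh_mul (θ : ℝ) :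
    deriv (deriv fun τ => cosh (θ * τ)) = fun τ => θ ^ 2 * cosh (θ * τ) := by
  rw [deriv_cosh_mul, deriv_const_mul_field', deriv_sinh_mul]
  ring_nf

theorem deriv_deriv_cosh_mul_sub (θ : ℝ) {g : ℝ → ℝ} (hg : ContDiff ℝ 2 g) (t : ℝ) :
    deriv (deriv fun τ => cosh (θ * τ) * g τ) t - θ ^ 2 * (cosh (θ * t) * g t)
      = cosh (θ * t) * (deriv (deriv g) t + 2 * (θ * tanh (θ * t)) * deriv g t) := by
  have hcosh : ContDiff ℝ 2 fun τ => cosh (θ * τ) := by fun_prop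
  rw [deriv_deriv_mul hcosh hg, deriv_deriv_cosh_mul, deriv_cosh_mul,
    tanh_eq_sinh_div_cosh]
  field_simp
  ring

theorem telegraph_to_kleinGordon_general (c θ : ℝ) (u : ℝ → ℝ → ℝ)
    (hu : ContDiff ℝ 2 (fun p : ℝ × ℝ => u p.1 p.2))
    (hPDE : ∀ x t : ℝ,
      deriv (deriv (fun τ => u x τ)) t
        + 2 * (θ * Real.tanh (θ * t)) * deriv (fun τ => u x τ) t
        = c ^ 2 * deriv (fun y => deriv (fun z => u z t) y) x) :
    ∀ x t : ℝ,
      deriv (deriv (fun τ => Real.cosh (θ * τ) * u x τ)) t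
        - θ ^ 2 * (Real.cosh (θ * t) * u x t)
        = c ^ 2 * deriv (fun y => deriv (fun z => Real.cosh (θ * t) * u z t) y) x := by
  intro x t
  have hline : ContDiff ℝ 2 fun τ => u x τ := hu.comp (contDiff_const.prodMk contDiff_id)
  rw [deriv_deriv_cosh_mul_sub θ hline t, hPDE x t]
  simp only [deriv_const_mul_field']
  ring

/-- If `u` satisfies the telegraph equation `u_tt + 2θ tanh(θt) u_t = c² u_xx`,
then `v(x,t) = cosh(θt) u(x,t)` satisfies `v_tt - θ² v = c² v_xx`. -/
theorem telegraph_to_kleinGordon (c θ : ℝ) (hc : 0 < c) (u : ℝ → ℝ → ℝ)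
    (hu : ContDiff ℝ 2 (fun p : ℝ × ℝ => u p.1 p.2))
    (hPDE : ∀ x t : ℝ,
      deriv (deriv (fun τ => u x τ)) t
        + 2 * (θ * Real.tanh (θ * t)) * deriv (fun τ => u x τ) t
        = c ^ 2 * deriv (fun y => deriv (fun z => u z t) y) x) :
    ∀ x t : ℝ,
      deriv (deriv (fun τ => Real.cosh (θ * τ) * u x τ)) t
        - θ ^ 2 * (Real.cosh (θ * t) * u x t)
        = c ^ 2 * deriv (fun y => deriv (fun z => Real.cosh (θ * t) * u z t) y) x :=
  telegraph_to_kleinGordon_general c θ u hu hPDE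
end

section
/- Let F, B : ℝ × ℝ → ℝ be twice differentiable and satisfy F_t = -cF_x - λ(t)(F - B) and B_t = cB_x + λ(t)(F - B), with λ continuously differentiable. Then P = F + B satisfies the telegraph equation P_tt + 2λ(t)P_t = c²P_xx. -/
/-!
In terms of `P = F + B` and `Q = F - B` the system reads `P_t = -c Q_x`, `Q_t = -c P_x - 2λ(t) Q`,
since the coupling terms cancel in the first equation and double in the second. Hence, by
symmetry of mixed partials, `P_tt = -c Q_tx = c² P_xx + 2cλ(t) Q_x = c² P_xx - 2λ(t) P_t`.
-/

open Function

noncomputable def partialFst (f : ℝ → ℝ → ℝ) (x t : ℝ) : ℝ := deriv (fun y => f y t) x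

noncomputable def partialSnd (f : ℝ → ℝ → ℝ) (x t : ℝ) : ℝ := deriv (fun τ => f x τ) t

section

variable {f g : ℝ → ℝ → ℝ} {x t : ℝ}

theorem hasDerivAt_fderiv_apply_fst (hf : DifferentiableAt ℝ (uncurry f) (x, t)) :
    HasDerivAt (fun y => f y t) (fderiv ℝ (uncurry f) (x, t) (1, 0)) x := by
  simpa [Function.comp_def] using
    hf.hasFDerivAt.comp_hasDerivAt x ((hasDerivAt_id x).prodMk (hasDerivAt_const x t))

theorem hasDerivAt_fderiv_apply_snd (hf : DifferentiableAt ℝ (uncurry f) (x, t)) :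
    HasDerivAt (fun τ => f x τ) (fderiv ℝ (uncurry f) (x, t) (0, 1)) t := by
  simpa [Function.comp_def] using
    hf.hasFDerivAt.comp_hasDerivAt t ((hasDerivAt_const t x).prodMk (hasDerivAt_id t))

theorem hasDerivAt_partialFst (hf : DifferentiableAt ℝ (uncurry f) (x, t)) :
    HasDerivAt (fun y => f y t) (partialFst f x t) x :=
  (hasDerivAt_fderiv_apply_fst hf).differentiableAt.hasDerivAt

theorem hasDerivAt_partialSnd (hf : DifferentiableAt ℝ (uncurry f) (x, t)) :
    HasDerivAt (fun τ => f x τ) (partialSnd f x t) t :=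
  (hasDerivAt_fderiv_apply_snd hf).differentiableAt.hasDerivAt

theorem partialFst_eq_fderiv (hf : DifferentiableAt ℝ (uncurry f) (x, t)) :
    partialFst f x t = fderiv ℝ (uncurry f) (x, t) (1, 0) :=
  (hasDerivAt_fderiv_apply_fst hf).deriv

theorem partialSnd_eq_fderiv (hf : DifferentiableAt ℝ (uncurry f) (x, t)) :
    partialSnd f x t = fderiv ℝ (uncurry f) (x, t) (0, 1) :=
  (hasDerivAt_fderiv_apply_snd hf).deriv

theorem partialFst_add (hf : DifferentiableAt ℝ (uncurry f) (x, t))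
    (hg : DifferentiableAt ℝ (uncurry g) (x, t)) :
    partialFst (f + g) x t = partialFst f x t + partialFst g x t :=
  ((hasDerivAt_partialFst hf).add (hasDerivAt_partialFst hg)).deriv

theorem partialFst_sub (hf : DifferentiableAt ℝ (uncurry f) (x, t))
    (hg : DifferentiableAt ℝ (uncurry g) (x, t)) :
    partialFst (f - g) x t = partialFst f x t - partialFst g x t :=
  ((hasDerivAt_partialFst hf).sub (hasDerivAt_partialFst hg)).deriv

theorem partialSnd_add (hf : DifferentiableAt ℝ (uncurry f) (x, t))
    (hg : DifferentiableAt ℝ (uncurry g) (x, t)) :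
    partialSnd (f + g) x t = partialSnd f x t + partialSnd g x t :=
  ((hasDerivAt_partialSnd hf).add (hasDerivAt_partialSnd hg)).deriv

theorem partialSnd_sub (hf : DifferentiableAt ℝ (uncurry f) (x, t))
    (hg : DifferentiableAt ℝ (uncurry g) (x, t)) :
    partialSnd (f - g) x t = partialSnd f x t - partialSnd g x t :=
  ((hasDerivAt_partialSnd hf).sub (hasDerivAt_partialSnd hg)).deriv

theorem uncurry_partialFst (hf : Differentiable ℝ (uncurry f)) :
    uncurry (partialFst f) = fun p => fderiv ℝ (uncurry f) p (1, 0) :=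
  funext fun _ => partialFst_eq_fderiv (hf _)

theorem uncurry_partialSnd (hf : Differentiable ℝ (uncurry f)) :
    uncurry (partialSnd f) = fun p => fderiv ℝ (uncurry f) p (0, 1) :=
  funext fun _ => partialSnd_eq_fderiv (hf _)

theorem ContDiff.partialFst {n : WithTop ℕ∞} (hf : ContDiff ℝ (n + 1) (uncurry f)) :
    ContDiff ℝ n (uncurry (partialFst f)) := by
  rw [uncurry_partialFst (hf.differentiable (by simp))]
  exact (hf.fderiv_right le_rfl).clm_apply contDiff_const

theorem ContDiff.partialSnd {n : WithTop ℕ∞} (hf : ContDiff ℝ (n + 1) (uncurry f)) :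
    ContDiff ℝ n (uncurry (partialSnd f)) := by
  rw [uncurry_partialSnd (hf.differentiable (by simp))]
  exact (hf.fderiv_right le_rfl).clm_apply contDiff_const

theorem partialSnd_partialFst (hf : ContDiff ℝ 2 (uncurry f)) (x t : ℝ) :
    partialSnd (partialFst f) x t = partialFst (partialSnd f) x t := by
  have hdf : Differentiable ℝ (fderiv ℝ (uncurry f)) :=
    (hf.fderiv_right (m := 1) (by norm_num)).differentiable one_ne_zero
  have hfst : DifferentiableAt ℝ (uncurry (partialFst f)) (x, t) :=
    (hf.partialFst (n := 1)).differentiable one_ne_zero _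
  have hsnd : DifferentiableAt ℝ (uncurry (partialSnd f)) (x, t) :=
    (hf.partialSnd (n := 1)).differentiable one_ne_zero _
  rw [partialSnd_eq_fderiv hfst, partialFst_eq_fderiv hsnd,
    uncurry_partialFst (hf.differentiable two_ne_zero),
    uncurry_partialSnd (hf.differentiable two_ne_zero),
    fderiv_clm_apply (hdf _) (differentiableAt_const _),
    fderiv_clm_apply (hdf _) (differentiableAt_const _)]
  simpa using ((hf.contDiffAt.isSymmSndFDerivAt (by simp)).eq (0, 1) (1, 0))

end

theorem telegraph_of_system {c : ℝ} {lam : ℝ → ℝ} {P Q : ℝ → ℝ → ℝ}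
    (hP : ContDiff ℝ 2 (uncurry P)) (hQ : ContDiff ℝ 2 (uncurry Q))
    (hPt : ∀ x t, partialSnd P x t = -c * partialFst Q x t)
    (hQt : ∀ x t, partialSnd Q x t = -c * partialFst P x t - 2 * lam t * Q x t) (x t : ℝ) :
    partialSnd (partialSnd P) x t + 2 * lam t * partialSnd P x t
      = c ^ 2 * partialFst (partialFst P) x t := by
  have hPx : ContDiff ℝ 1 (uncurry (partialFst P)) := hP.partialFst
  have hQx : ContDiff ℝ 1 (uncurry (partialFst Q)) := hQ.partialFst
  have hPtt : partialSnd (partialSnd P) x t = -c * partialSnd (partialFst Q) x t := by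
    rw [partialSnd, funext (hPt x)]
    exact ((hasDerivAt_partialSnd (hQx.differentiable one_ne_zero _)).const_mul (-c)).deriv
  have hQtx : partialFst (partialSnd Q) x t
      = -c * partialFst (partialFst P) x t - 2 * lam t * partialFst Q x t := by
    rw [partialFst, funext fun y => hQt y t]
    exact (((hasDerivAt_partialFst (hPx.differentiable one_ne_zero _)).const_mul (-c)).sub
      ((hasDerivAt_partialFst (hQ.differentiable two_ne_zero _)).const_mul (2 * lam t))).deriv
  rw [hPtt, partialSnd_partialFst hQ, hQtx, hPt]
  ring

theorem sum_satisfies_telegraph_general (c : ℝ) (lam : ℝ → ℝ)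
    (F B : ℝ → ℝ → ℝ)
    (hF : ContDiff ℝ 2 (fun p : ℝ × ℝ => F p.1 p.2))
    (hB : ContDiff ℝ 2 (fun p : ℝ × ℝ => B p.1 p.2))
    (hFt : ∀ x t : ℝ, deriv (fun τ => F x τ) t
      = -c * deriv (fun y => F y t) x - lam t * (F x t - B x t))
    (hBt : ∀ x t : ℝ, deriv (fun τ => B x τ) t
      = c * deriv (fun y => B y t) x + lam t * (F x t - B x t)) :
    ∀ x t : ℝ,
      deriv (deriv (fun τ => F x τ + B x τ)) t
        + 2 * lam t * deriv (fun τ => F x τ + B x τ) t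
        = c ^ 2 * deriv (fun y => deriv (fun z => F z t + B z t) y) x := by
  have hFd : Differentiable ℝ (uncurry F) := hF.differentiable two_ne_zero
  have hBd : Differentiable ℝ (uncurry B) := hB.differentiable two_ne_zero
  have hFt' : ∀ x t, partialSnd F x t = -c * partialFst F x t - lam t * (F x t - B x t) := hFt
  have hBt' : ∀ x t, partialSnd B x t = c * partialFst B x t + lam t * (F x t - B x t) := hBt
  have hsum_t : ∀ x t, partialSnd (F + B) x t = -c * partialFst (F - B) x t := by
    intro x t
    rw [partialSnd_add (hFd _) (hBd _), partialFst_sub (hFd _) (hBd _), hFt', hBt']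
    ring
  have hdiff_t : ∀ x t, partialSnd (F - B) x t
      = -c * partialFst (F + B) x t - 2 * lam t * (F - B) x t := by
    intro x t
    rw [partialSnd_sub (hFd _) (hBd _), partialFst_add (hFd _) (hBd _), hFt', hBt',
      Pi.sub_apply, Pi.sub_apply]
    ring
  exact telegraph_of_system (P := F + B) (Q := F - B) (hF.add hB) (hF.sub hB) hsum_t hdiff_t

/-- If `F, B` satisfy the first-order hyperbolic system of the telegraph process,
then `P = F + B` satisfies the telegraph equation `P_tt + 2λ(t) P_t = c² P_xx`. -/
theorem sum_satisfies_telegraph (c : ℝ) (hc : 0 < c) (lam : ℝ → ℝ)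
    (hlam : ContDiff ℝ 1 lam) (F B : ℝ → ℝ → ℝ)
    (hF : ContDiff ℝ 2 (fun p : ℝ × ℝ => F p.1 p.2))
    (hB : ContDiff ℝ 2 (fun p : ℝ × ℝ => B p.1 p.2))
    (hFt : ∀ x t : ℝ, deriv (fun τ => F x τ) t
      = -c * deriv (fun y => F y t) x - lam t * (F x t - B x t))
    (hBt : ∀ x t : ℝ, deriv (fun τ => B x τ) t
      = c * deriv (fun y => B y t) x + lam t * (F x t - B x t)) :
    ∀ x t : ℝ,
      deriv (deriv (fun τ => F x τ + B x τ)) t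
        + 2 * lam t * deriv (fun τ => F x τ + B x τ) t
        = c ^ 2 * deriv (fun y => deriv (fun z => F z t + B z t) y) x :=
  sum_satisfies_telegraph_general c lam F B hF hB hFt hBt
end

section
/- For constants θ, c with c > 0 and t > 0, ∫_{-ct}^{ct} I₀((θ/c)·√(c²t² - x²)) dx = (c/θ)·(e^{θt} - e^{-θt}). -/
/-!
Expand `I₀` in its power series and integrate termwise; dominated convergence applies because on
`[-a, a]` the `k`-th term is bounded by the `k`-th term of the series of `I₀(ra)`. Integrating
`d/dx [x (a² - x²)^(k+1)]` gives the recursion `(2k+3) J_{k+1} = 2(k+1) a² J_k` for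
`J_k = ∫_{-a}^{a} (a² - x²)^k dx`, whence `J_k = 2^(2k+1) (k!)² a^(2k+1) / (2k+1)!`. The `k`-th
term of the integrated series is then `2 r^(2k) a^(2k+1) / (2k+1)!`, so that
`r ∫_{-a}^{a} I₀(r √(a² - x²)) dx = 2 sinh (ra)`; take `r = θ/c` and `a = ct`.
-/

open Real intervalIntegral
open scoped Nat

lemma hasDerivAt_mul_sq_sub_sq_pow_succ (a x : ℝ) (k : ℕ) :
    HasDerivAt (fun x => x * (a ^ 2 - x ^ 2) ^ (k + 1))
      ((2 * k + 3) * (a ^ 2 - x ^ 2) ^ (k + 1) - 2 * (k + 1) * a ^ 2 * (a ^ 2 - x ^ 2) ^ k) x := by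
  have h := (hasDerivAt_id' x).mul (((hasDerivAt_pow 2 x).const_sub (a ^ 2)).pow (k + 1))
  refine h.congr_deriv ?_
  simp only [Nat.add_sub_cancel, Pi.pow_apply]
  push_cast
  ring

lemma integral_sq_sub_sq_pow_succ (a : ℝ) (k : ℕ) :
    (2 * k + 3) * ∫ x in -a..a, (a ^ 2 - x ^ 2) ^ (k + 1)
      = 2 * (k + 1) * a ^ 2 * ∫ x in -a..a, (a ^ 2 - x ^ 2) ^ k := by
  have hFTC := integral_eq_sub_of_hasDerivAt (a := -a) (b := a)
    (fun x _ => hasDerivAt_mul_sq_sub_sq_pow_succ a x k)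
    (Continuous.intervalIntegrable (by fun_prop) _ _)
  rw [integral_sub (Continuous.intervalIntegrable (by fun_prop) _ _)
    (Continuous.intervalIntegrable (by fun_prop) _ _), integral_const_mul,
    integral_const_mul] at hFTC
  simp only [even_two, Even.neg_pow, sub_self, ne_eq, Nat.add_eq_zero_iff, one_ne_zero, and_false,
    not_false_eq_true, zero_pow, mul_zero] at hFTC
  linarith

lemma integral_sq_sub_sq_pow (a : ℝ) (k : ℕ) :
    ∫ x in -a..a, (a ^ 2 - x ^ 2) ^ k
      = 2 ^ (2 * k + 1) * (k ! : ℝ) ^ 2 / (2 * k + 1)! * a ^ (2 * k + 1) := by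
  induction k with
  | zero => simp [two_mul]
  | succ k ih =>
    have hrec : ∫ x in -a..a, (a ^ 2 - x ^ 2) ^ (k + 1)
        = 2 * (k + 1) * a ^ 2 * (∫ x in -a..a, (a ^ 2 - x ^ 2) ^ k) / (2 * k + 3) := by
      rw [eq_div_iff (by positivity), mul_comm]
      exact integral_sq_sub_sq_pow_succ a k
    rw [hrec, ih, show 2 * (k + 1) + 1 = 2 * k + 1 + 1 + 1 by ring,
      Nat.factorial_succ (2 * k + 1 + 1), Nat.factorial_succ (2 * k + 1), Nat.factorial_succ k]
    push_cast
    field_simp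
    ring

noncomputable def besselI0 (z : ℝ) : ℝ := ∑' k : ℕ, (z / 2) ^ (2 * k) / (k ! : ℝ) ^ 2

lemma summable_besselI0_series (z : ℝ) :
    Summable fun k : ℕ => (z / 2) ^ (2 * k) / (k ! : ℝ) ^ 2 := by
  refine (summable_pow_div_factorial ((z / 2) ^ 2)).of_nonneg_of_le
    (fun k => by rw [pow_mul]; positivity) fun k => ?_
  rw [pow_mul]
  exact div_le_div_of_nonneg_left (by positivity) (by positivity)
    (le_self_pow₀ (Nat.one_le_cast.mpr k.factorial_pos) two_ne_zero)

lemma hasSum_besselI0_mul_sqrt (r : ℝ) {s : ℝ} (hs : 0 ≤ s) :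
    HasSum (fun k : ℕ => (r / 2) ^ (2 * k) / (k ! : ℝ) ^ 2 * s ^ k) (besselI0 (r * √s)) := by
  unfold besselI0
  convert (summable_besselI0_series (r * √s)).hasSum using 2 with k
  rw [mul_div_right_comm, mul_pow, pow_mul √s, sq_sqrt hs]
  ring

lemma sq_le_sq_of_mem_uIoc_neg {a x : ℝ} (hx : x ∈ Set.uIoc (-a) a) : x ^ 2 ≤ a ^ 2 := by
  rcases Set.mem_uIoc.mp hx with h | h <;> nlinarith [h.1, h.2]

lemma hasSum_integral_besselI0_mul_sqrt (r a : ℝ) :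
    HasSum (fun k : ℕ => 2 * r ^ (2 * k) * a ^ (2 * k + 1) / (2 * k + 1)!)
      (∫ x in -a..a, besselI0 (r * √(a ^ 2 - x ^ 2))) := by
  have hterm (k : ℕ) : ∫ x in -a..a, (r / 2) ^ (2 * k) / (k ! : ℝ) ^ 2 * (a ^ 2 - x ^ 2) ^ k
      = 2 * r ^ (2 * k) * a ^ (2 * k + 1) / (2 * k + 1)! := by
    rw [integral_const_mul, integral_sq_sub_sq_pow, div_pow, pow_succ 2 (2 * k)]
    field_simp
  refine funext hterm ▸ hasSum_integral_of_dominated_convergence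
    (fun k _ => (r * a / 2) ^ (2 * k) / (k ! : ℝ) ^ 2)
    (fun k => Continuous.aestronglyMeasurable (by fun_prop))
    (fun k => Filter.Eventually.of_forall fun x hx => ?_)
    (Filter.Eventually.of_forall fun _ _ => summable_besselI0_series (r * a))
    intervalIntegrable_const
    (Filter.Eventually.of_forall fun x hx =>
      hasSum_besselI0_mul_sqrt r (sub_nonneg.mpr (sq_le_sq_of_mem_uIoc_neg hx)))
  have hx2 := sub_nonneg.mpr (sq_le_sq_of_mem_uIoc_neg hx)
  have hcoef : 0 ≤ (r / 2) ^ (2 * k) / (k ! : ℝ) ^ 2 := by rw [pow_mul]; positivity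
  rw [norm_of_nonneg (mul_nonneg hcoef (pow_nonneg hx2 k)),
    show (r * a / 2) ^ (2 * k) = (r / 2) ^ (2 * k) * (a ^ 2) ^ k by ring, mul_div_right_comm]
  exact mul_le_mul_of_nonneg_left (pow_le_pow_left₀ hx2 (by nlinarith) k) hcoef

lemma mul_integral_besselI0_mul_sqrt (r a : ℝ) :
    r * ∫ x in -a..a, besselI0 (r * √(a ^ 2 - x ^ 2)) = 2 * sinh (r * a) := by
  refine ((hasSum_integral_besselI0_mul_sqrt r a).mul_left r).unique ?_
  convert (hasSum_sinh (r * a)).mul_left 2 using 2 with k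
  ring

theorem integral_besselI0_general (θ c t : ℝ) (hθ : θ ≠ 0) (hc : 0 < c)
    (I0 : ℝ → ℝ)
    (hI0 : ∀ z : ℝ, I0 z = ∑' k : ℕ, (z / 2) ^ (2 * k) / ((Nat.factorial k : ℝ)) ^ 2) :
    ∫ x in (-(c * t))..(c * t), I0 (θ / c * Real.sqrt (c ^ 2 * t ^ 2 - x ^ 2))
      = c / θ * (Real.exp (θ * t) - Real.exp (-(θ * t))) := by
  have key := mul_integral_besselI0_mul_sqrt (θ / c) (c * t)
  rw [show θ / c * (c * t) = θ * t by field_simp, sinh_eq, mul_pow] at key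
  rw [show I0 = besselI0 from funext hI0]
  field_simp at key ⊢
  linarith

/-- `∫_{-ct}^{ct} I₀((θ/c)√(c²t² - x²)) dx = (c/θ)(e^{θt} - e^{-θt})`, where `I₀`
is the modified Bessel function of the first kind of order 0, given by its series. -/
theorem integral_besselI0 (θ c t : ℝ) (hθ : θ ≠ 0) (hc : 0 < c) (ht : 0 < t)
    (I0 : ℝ → ℝ)
    (hI0 : ∀ z : ℝ, I0 z = ∑' k : ℕ, (z / 2) ^ (2 * k) / ((Nat.factorial k : ℝ)) ^ 2) :
    ∫ x in (-(c * t))..(c * t), I0 (θ / c * Real.sqrt (c ^ 2 * t ^ 2 - x ^ 2))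
      = c / θ * (Real.exp (θ * t) - Real.exp (-(θ * t))) :=
  integral_besselI0_general θ c t hθ hc I0 hI0
end
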